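/- arXiv:1106.4522 — 3 statements merged into one kernel-verified Lean document; each statement's English description precedes it below -/
import Mathlib

section
/- Let p be a prime and n an integer. Then n is not divisible by p^2 + p + 1 if and only if exactly one of the following holds: (i) n = x + p*y + p^2*z for integers x > y ≥ z with x - z ≤ p, or (ii) n = p^2*x + p*y + z for integers x ≥ y > z with x - z ≤ p. Moreover, the two cases are mutually exclusive, and in either case the triple (x, y, z) is uniquely determined by n. -/
/-! Put `q = p² + p + 1`. Form (i) reads `n = q z + (a + p c)` and form (ii) reads
`-n = q (-x) + (a + p c)`, where `a = x - z` and `c` is `y - z`, resp. `x - y`; in both cases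
`0 ≤ c < a ≤ p`. Such numbers `a + p c` lie in `[1, q - 1]` and determine their digits, and
`s ↦ q - s` sends the digits `(a, c)` to `(p + 1 - a, p - c)`, which exchanges `c < a` with
`a ≤ c`. So exactly one of `n % q` and `-n % q` is of this shape when `q ∤ n`, and neither is
when `q ∣ n`. -/

def TriangleDigits (p a c : ℤ) : Prop := 0 ≤ c ∧ c < a ∧ a ≤ p

def IsTriangleSum (p s : ℤ) : Prop := ∃ a c, TriangleDigits p a c ∧ s = a + p * c

lemma digits_unique {p a c a' c' : ℤ} (ha : 1 ≤ a) (hap : a ≤ p) (ha' : 1 ≤ a') (hap' : a' ≤ p)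
    (h : a + p * c = a' + p * c') : a = a' ∧ c = c' := by
  have hp : 0 < p := by omega
  have hdiv : ∀ a c, 1 ≤ a → a ≤ p → (a - 1 + p * c) / p = c := fun a c ha hap =>
    ((Int.ediv_emod_unique hp).2 ⟨rfl, by omega, by omega⟩).1
  have hc : c = c' := by
    rw [← hdiv a c ha hap, ← hdiv a' c' ha' hap', show a - 1 + p * c = a' - 1 + p * c' by linarith]
  subst hc
  exact ⟨by linarith, rfl⟩

lemma sq_add_self_add_one_pos (p : ℤ) : 0 < p ^ 2 + p + 1 := by
  nlinarith [sq_nonneg (2 * p + 1)]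

namespace TriangleDigits

variable {p a c a' c' : ℤ}

lemma unique (h : TriangleDigits p a c) (h' : TriangleDigits p a' c')
    (hs : a + p * c = a' + p * c') : a = a' ∧ c = c' :=
  digits_unique (by linarith [h.1, h.2.1]) h.2.2 (by linarith [h'.1, h'.2.1]) h'.2.2 hs

lemma add_mul_pos (h : TriangleDigits p a c) : 0 < a + p * c := by
  obtain ⟨hc, hca, hap⟩ := h
  nlinarith

lemma add_mul_lt (h : TriangleDigits p a c) : a + p * c < p ^ 2 + p + 1 := by
  obtain ⟨hc, hca, hap⟩ := h
  nlinarith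

lemma add_ne_compl (h : TriangleDigits p a c) (h' : TriangleDigits p a' c') :
    a + p * c + (a' + p * c') ≠ p ^ 2 + p + 1 := by
  intro hsum
  obtain ⟨rfl, rfl⟩ : a' = p + 1 - a ∧ c' = p - c :=
    digits_unique (by linarith [h'.1, h'.2.1]) h'.2.2 (by linarith [h.2.2])
      (by linarith [h.1, h.2.1]) (by linear_combination hsum)
  linarith [h.2.1, h'.2.1]

lemma mul_add_unique {z z' : ℤ} (h : TriangleDigits p a c) (h' : TriangleDigits p a' c')
    (hn : (p ^ 2 + p + 1) * z + (a + p * c) = (p ^ 2 + p + 1) * z' + (a' + p * c')) :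
    z = z' ∧ a = a' ∧ c = c' := by
  have hq := sq_add_self_add_one_pos p
  obtain ⟨hz, hs⟩ := (Int.ediv_emod_unique hq).2 ⟨add_comm _ _, h.add_mul_pos.le, h.add_mul_lt⟩
  obtain ⟨hz', hs'⟩ := (Int.ediv_emod_unique hq).2 ⟨add_comm _ _, h'.add_mul_pos.le, h'.add_mul_lt⟩
  rw [hn] at hz hs
  exact ⟨hz.symm.trans hz', h.unique h' (hs.symm.trans hs')⟩

end TriangleDigits

namespace IsTriangleSum

variable {p s : ℤ}

lemma pos (h : IsTriangleSum p s) : 0 < s := by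
  obtain ⟨a, c, hd, rfl⟩ := h
  exact hd.add_mul_pos

lemma not_compl (h : IsTriangleSum p s) : ¬ IsTriangleSum p (p ^ 2 + p + 1 - s) := by
  rintro ⟨a', c', hd', hs'⟩
  obtain ⟨a, c, hd, rfl⟩ := h
  exact hd.add_ne_compl hd' (by linarith)

lemma or_compl (hp₀ : 0 ≤ p) (h0 : 0 < s) (hq : s < p ^ 2 + p + 1) :
    IsTriangleSum p s ∨ IsTriangleSum p (p ^ 2 + p + 1 - s) := by
  have hp : 0 < p := by
    by_contra! hp
    nlinarith
  have hdm := Int.emod_add_mul_ediv (s - 1) p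
  have hr0 := Int.emod_nonneg (s - 1) hp.ne'
  have hrp := Int.emod_lt_of_pos (s - 1) hp
  set c := (s - 1) / p
  have hc0 : 0 ≤ c := Int.ediv_nonneg (by omega) hp.le
  have hcp : c ≤ p := by nlinarith
  by_cases hca : c < (s - 1) % p + 1
  · exact .inl ⟨(s - 1) % p + 1, c, ⟨hc0, hca, by omega⟩, by linarith⟩
  · refine .inr ⟨p - (s - 1) % p, p - c, ⟨by omega, by omega, by omega⟩, ?_⟩
    linear_combination hdm

end IsTriangleSum

lemma not_dvd_iff_xor_isTriangleSum {p : ℤ} (hp : 0 ≤ p) (n : ℤ) :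
    ¬ (p ^ 2 + p + 1 ∣ n) ↔
      Xor' (IsTriangleSum p (n % (p ^ 2 + p + 1))) (IsTriangleSum p (-n % (p ^ 2 + p + 1))) := by
  have hq := sq_add_self_add_one_pos p
  rw [Int.neg_emod, Int.natCast_natAbs, abs_of_pos hq]
  by_cases hdvd : p ^ 2 + p + 1 ∣ n
  · simp only [hdvd, Int.emod_eq_zero_of_dvd hdvd, if_true, not_true_eq_false, false_iff]
    exact fun h => (h.elim (·.1.pos) (·.1.pos)).false
  · have h0 : n % (p ^ 2 + p + 1) ≠ 0 := fun h => hdvd (Int.dvd_of_emod_eq_zero h)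
    have hr := Int.emod_nonneg n hq.ne'
    have hrq := Int.emod_lt_of_pos n hq
    simp only [hdvd, if_false, not_false_eq_true, true_iff]
    rcases IsTriangleSum.or_compl hp (by omega) hrq with h | h
    · exact .inl ⟨h, h.not_compl⟩
    · exact .inr ⟨h, fun h' => h'.not_compl h⟩

lemma isTriangleSum_emod_iff (p n : ℤ) :
    IsTriangleSum p (n % (p ^ 2 + p + 1)) ↔
      ∃ z a c, TriangleDigits p a c ∧ n = (p ^ 2 + p + 1) * z + (a + p * c) := by
  have hq := sq_add_self_add_one_pos p
  constructor
  · rintro ⟨a, c, hd, hs⟩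
    exact ⟨n / (p ^ 2 + p + 1), a, c, hd, by rw [← hs, Int.mul_ediv_add_emod]⟩
  · rintro ⟨z, a, c, hd, rfl⟩
    exact ⟨a, c, hd,
      ((Int.ediv_emod_unique hq).2 ⟨add_comm _ _, hd.add_mul_pos.le, hd.add_mul_lt⟩).2⟩

-- Forms (i) and (ii): the digits of weights `1, p, p²` decrease, resp. increase.
lemma exists_antitone_digits_iff (p n : ℤ) :
    (∃ x y z : ℤ, n = x + p * y + p ^ 2 * z ∧ x > y ∧ y ≥ z ∧ x - z ≤ p) ↔
      IsTriangleSum p (n % (p ^ 2 + p + 1)) := by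
  rw [isTriangleSum_emod_iff]
  constructor
  · rintro ⟨x, y, z, rfl, hxy, hyz, hxz⟩
    exact ⟨z, x - z, y - z, ⟨by omega, by omega, hxz⟩, by ring⟩
  · rintro ⟨z, a, c, ⟨hc, hca, hap⟩, rfl⟩
    exact ⟨a + z, c + z, z, by ring, by omega, by omega, by omega⟩

lemma exists_monotone_digits_iff (p n : ℤ) :
    (∃ x y z : ℤ, n = p ^ 2 * x + p * y + z ∧ x ≥ y ∧ y > z ∧ x - z ≤ p) ↔
      IsTriangleSum p (-n % (p ^ 2 + p + 1)) := by
  rw [isTriangleSum_emod_iff]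
  constructor
  · rintro ⟨x, y, z, rfl, hxy, hyz, hxz⟩
    exact ⟨-x, x - z, x - y, ⟨by omega, by omega, hxz⟩, by ring⟩
  · rintro ⟨z, a, c, ⟨hc, hca, hap⟩, hn⟩
    exact ⟨-z, -z - c, -z - a, by linear_combination -hn, by omega, by omega, by omega⟩

lemma antitone_digits_unique (p n : ℤ) :
    ∀ x y z x' y' z' : ℤ,
      (n = x + p * y + p ^ 2 * z ∧ x > y ∧ y ≥ z ∧ x - z ≤ p) →
      (n = x' + p * y' + p ^ 2 * z' ∧ x' > y' ∧ y' ≥ z' ∧ x' - z' ≤ p) →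
      x = x' ∧ y = y' ∧ z = z' := by
  rintro x y z x' y' z' ⟨rfl, hxy, hyz, hxz⟩ ⟨hn, hxy', hyz', hxz'⟩
  obtain ⟨rfl, ha, hc⟩ := TriangleDigits.mul_add_unique (z := z) (z' := z') (a := x - z)
    (c := y - z) (a' := x' - z') (c' := y' - z') ⟨by omega, by omega, hxz⟩
    ⟨by omega, by omega, hxz'⟩
    (by linear_combination hn)
  omega

lemma monotone_digits_unique (p n : ℤ) :
    ∀ x y z x' y' z' : ℤ,
      (n = p ^ 2 * x + p * y + z ∧ x ≥ y ∧ y > z ∧ x - z ≤ p) →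
      (n = p ^ 2 * x' + p * y' + z' ∧ x' ≥ y' ∧ y' > z' ∧ x' - z' ≤ p) →
      x = x' ∧ y = y' ∧ z = z' := by
  rintro x y z x' y' z' ⟨rfl, hxy, hyz, hxz⟩ ⟨hn, hxy', hyz', hxz'⟩
  obtain ⟨hx, ha, hc⟩ := TriangleDigits.mul_add_unique (z := -x) (z' := -x') (a := x - z)
    (c := x - y) (a' := x' - z') (c' := x' - y') ⟨by omega, by omega, hxz⟩
    ⟨by omega, by omega, hxz'⟩
    (by linear_combination -hn)
  omega

theorem stmt_0_general (p : ℕ) (n : ℤ) :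
    (¬ ((p : ℤ) ^ 2 + p + 1 ∣ n) ↔
      Xor' (∃ x y z : ℤ, n = x + p * y + p ^ 2 * z ∧ x > y ∧ y ≥ z ∧ x - z ≤ p)
           (∃ x y z : ℤ, n = p ^ 2 * x + p * y + z ∧ x ≥ y ∧ y > z ∧ x - z ≤ p)) ∧
    (∀ x y z x' y' z' : ℤ,
      (n = x + p * y + p ^ 2 * z ∧ x > y ∧ y ≥ z ∧ x - z ≤ p) →
      (n = x' + p * y' + p ^ 2 * z' ∧ x' > y' ∧ y' ≥ z' ∧ x' - z' ≤ p) →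
      x = x' ∧ y = y' ∧ z = z') ∧
    (∀ x y z x' y' z' : ℤ,
      (n = p ^ 2 * x + p * y + z ∧ x ≥ y ∧ y > z ∧ x - z ≤ p) →
      (n = p ^ 2 * x' + p * y' + z' ∧ x' ≥ y' ∧ y' > z' ∧ x' - z' ≤ p) →
      x = x' ∧ y = y' ∧ z = z') := by
  refine ⟨?_, antitone_digits_unique p n, monotone_digits_unique p n⟩
  rw [exists_antitone_digits_iff, exists_monotone_digits_iff]
  exact not_dvd_iff_xor_isTriangleSum (Int.natCast_nonneg p) n

theorem stmt_0 (p : ℕ) (hp : p.Prime) (n : ℤ) :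
    (¬ ((p : ℤ) ^ 2 + p + 1 ∣ n) ↔
      Xor' (∃ x y z : ℤ, n = x + p * y + p ^ 2 * z ∧ x > y ∧ y ≥ z ∧ x - z ≤ p)
           (∃ x y z : ℤ, n = p ^ 2 * x + p * y + z ∧ x ≥ y ∧ y > z ∧ x - z ≤ p)) ∧
    (∀ x y z x' y' z' : ℤ,
      (n = x + p * y + p ^ 2 * z ∧ x > y ∧ y ≥ z ∧ x - z ≤ p) →
      (n = x' + p * y' + p ^ 2 * z' ∧ x' > y' ∧ y' ≥ z' ∧ x' - z' ≤ p) →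
      x = x' ∧ y = y' ∧ z = z') ∧
    (∀ x y z x' y' z' : ℤ,
      (n = p ^ 2 * x + p * y + z ∧ x ≥ y ∧ y > z ∧ x - z ≤ p) →
      (n = p ^ 2 * x' + p * y' + z' ∧ x' ≥ y' ∧ y' > z' ∧ x' - z' ≤ p) →
      x = x' ∧ y = y' ∧ z = z') :=
  stmt_0_general p n
end

section
/- Let p be a prime. Suppose integers a > b > c with a - c ≤ p, and integers x > y > z with x - z ≤ p, satisfy a + b + c = x + y + z. If the multiset {a + p*b + p^2*c, b + p*c + p^2*a, c + p*a + p^2*b} equals the multiset {x + p*y + p^2*z, y + p*z + p^2*x, z + p*x + p^2*y} when considered modulo p^3 - 1, then (a, b, c) = (x, y, z). -/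
/-- Auxiliary: the "shifted" matching is impossible. -/
lemma stmt_1_case2 (p a b c x y z k : ℤ) (hp : 2 ≤ p)
    (hab : b < a) (hbc : c < b) (hac : a - c ≤ p)
    (hxy : y < x) (hyz : z < y) (hxz : x - z ≤ p)
    (hsum : a + b + c = x + y + z)
    (E : (z - b) + (p + 1) * (x - c) = (p ^ 2 + p + 1) * k) : False := by
  have hk1 : 1 ≤ k := by
    by_contra h'
    push_neg at h'
    have hk0 : k ≤ 0 := by omega
    nlinarith [mul_nonpos_of_nonneg_of_nonpos (show (0:ℤ) ≤ p ^ 2 + p + 1 by nlinarith) hk0,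
      mul_nonneg (show (0:ℤ) ≤ p + 1 by linarith) (show (0:ℤ) ≤ x - c - 2 by linarith)]
  have hk2 : k ≤ 1 := by
    by_contra h'
    push_neg at h'
    have hk0 : 2 ≤ k := by omega
    nlinarith [mul_nonneg (show (0:ℤ) ≤ p ^ 2 + p + 1 by nlinarith) (show (0:ℤ) ≤ k - 2 by omega),
      mul_nonneg (show (0:ℤ) ≤ p + 1 by linarith) (show (0:ℤ) ≤ 4 * p - 3 * (x - c) by linarith)]
  have hk : k = 1 := le_antisymm hk2 hk1
  subst hk
  have hA : p ≤ x - c := by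
    by_contra h'
    push_neg at h'
    have h'' : x - c ≤ p - 1 := by omega
    nlinarith [mul_nonneg (show (0:ℤ) ≤ p + 1 by linarith)
      (show (0:ℤ) ≤ p - 1 - (x - c) by linarith)]
  have hB : x - c ≤ p := by
    by_contra h'
    push_neg at h'
    have h'' : p + 1 ≤ x - c := by omega
    nlinarith [mul_nonneg (show (0:ℤ) ≤ p + 1 by linarith)
      (show (0:ℤ) ≤ (x - c) - (p + 1) by linarith)]
  have hx : x = c + p := by omega
  subst hx
  have hz : z = b + 1 := by linarith [E]
  linarith

theorem stmt_1 (p : ℕ) (hp : p.Prime) (a b c x y z : ℤ)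
    (hab : a > b) (hbc : b > c) (hac : a - c ≤ p)
    (hxy : x > y) (hyz : y > z) (hxz : x - z ≤ p)
    (hsum : a + b + c = x + y + z)
    (h : ({a + p * b + p ^ 2 * c, b + p * c + p ^ 2 * a, c + p * a + p ^ 2 * b} :
          Multiset ℤ).map (fun m => (m : ZMod (p ^ 3 - 1))) =
        ({x + p * y + p ^ 2 * z, y + p * z + p ^ 2 * x, z + p * x + p ^ 2 * y} :
          Multiset ℤ).map (fun m => (m : ZMod (p ^ 3 - 1)))) :
    a = x ∧ b = y ∧ c = z := by
  have hp2 : (2:ℤ) ≤ (p:ℤ) := by exact_mod_cast hp.two_le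
  have hp3 : 1 ≤ p ^ 3 := Nat.one_le_pow _ _ hp.pos
  have hNz : ((p ^ 3 - 1 : ℕ) : ℤ) = (p:ℤ) ^ 3 - 1 := by
    push_cast [hp3]
    ring
  have hpne : (p:ℤ) - 1 ≠ 0 := by intro h'; linarith
  have hmem : ((a + p * b + p ^ 2 * c : ℤ) : ZMod (p ^ 3 - 1)) ∈
      (({x + p * y + p ^ 2 * z, y + p * z + p ^ 2 * x, z + p * x + p ^ 2 * y} :
        Multiset ℤ).map (fun m => (m : ZMod (p ^ 3 - 1)))) := by
    rw [← h]
    exact Multiset.mem_map_of_mem _ (by simp)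
  simp at hmem
  rcases hmem with h1 | h2 | h3
  · -- a+pb+p²c ≡ x+py+p²z
    have h1' : ((a + p * b + p ^ 2 * c : ℤ) : ZMod (p ^ 3 - 1)) =
        ((x + p * y + p ^ 2 * z : ℤ) : ZMod (p ^ 3 - 1)) := by
      push_cast
      exact h1
    have hd := Int.ModEq.dvd ((ZMod.intCast_eq_intCast_iff' _ _ _).mp h1')
    rw [hNz] at hd
    obtain ⟨k, hk⟩ := hd
    have E : (y - b) + ((p:ℤ) + 1) * (z - c) = ((p:ℤ) ^ 2 + p + 1) * k := by
      apply mul_left_cancel₀ hpne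
      linear_combination hk + hsum
    have hk1 : k ≤ 0 := by
      by_contra h'
      push_neg at h'
      have hk0 : 1 ≤ k := by omega
      nlinarith [mul_nonneg (show (0:ℤ) ≤ (p:ℤ) ^ 2 + p + 1 by nlinarith)
          (show (0:ℤ) ≤ k - 1 by omega),
        mul_nonneg (show (0:ℤ) ≤ (p:ℤ) + 1 by linarith)
          (show (0:ℤ) ≤ 2 * p - 3 * (z - c) by linarith)]
    have hk2 : 0 ≤ k := by
      by_contra h'
      push_neg at h'
      have hk0 : k ≤ -1 := by omega
      nlinarith [mul_nonneg (show (0:ℤ) ≤ (p:ℤ) ^ 2 + p + 1 by nlinarith)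
          (show (0:ℤ) ≤ -k - 1 by omega),
        mul_nonneg (show (0:ℤ) ≤ (p:ℤ) + 1 by linarith)
          (show (0:ℤ) ≤ 3 * (z - c) + 2 * p by linarith)]
    have hk0 : k = 0 := le_antisymm hk1 hk2
    subst hk0
    have hzc : z = c := by
      rcases lt_trichotomy z c with h' | h' | h'
      · exfalso
        nlinarith [mul_nonneg (show (0:ℤ) ≤ (p:ℤ) + 1 by linarith)
          (show (0:ℤ) ≤ c - z - 1 by omega)]
      · omega
      · exfalso
        nlinarith [mul_nonneg (show (0:ℤ) ≤ (p:ℤ) + 1 by linarith)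
          (show (0:ℤ) ≤ z - c - 1 by omega)]
    subst hzc
    have hby : b = y := by
      have h0 : ((p:ℤ) + 1) * (z - z) = 0 := by ring
      linarith [E]
    exact ⟨by linarith, hby, rfl⟩
  · -- a+pb+p²c ≡ y+pz+p²x : impossible
    exfalso
    have h2' : ((a + p * b + p ^ 2 * c : ℤ) : ZMod (p ^ 3 - 1)) =
        ((y + p * z + p ^ 2 * x : ℤ) : ZMod (p ^ 3 - 1)) := by
      push_cast
      exact h2
    have hd := Int.ModEq.dvd ((ZMod.intCast_eq_intCast_iff' _ _ _).mp h2')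
    rw [hNz] at hd
    obtain ⟨k, hk⟩ := hd
    have E : (z - b) + ((p:ℤ) + 1) * (x - c) = ((p:ℤ) ^ 2 + p + 1) * k := by
      apply mul_left_cancel₀ hpne
      linear_combination hk + hsum
    exact stmt_1_case2 (p:ℤ) a b c x y z k hp2 hab hbc hac hxy hyz hxz hsum E
  · -- a+pb+p²c ≡ z+px+p²y : impossible (symmetric to previous case)
    exfalso
    have h3' : ((a + p * b + p ^ 2 * c : ℤ) : ZMod (p ^ 3 - 1)) =
        ((z + p * x + p ^ 2 * y : ℤ) : ZMod (p ^ 3 - 1)) := by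
      push_cast
      exact h3
    have hd := Int.ModEq.dvd ((ZMod.intCast_eq_intCast_iff' _ _ _).mp h3')
    rw [hNz] at hd
    obtain ⟨k, hk⟩ := hd
    have E : (x - b) + ((p:ℤ) + 1) * (y - c) = ((p:ℤ) ^ 2 + p + 1) * k := by
      apply mul_left_cancel₀ hpne
      linear_combination hk + hsum
    have E' : (c - y) + ((p:ℤ) + 1) * (a - z) =
        ((p:ℤ) ^ 2 + p + 1) * (((p:ℤ) + 1) * k - (y - c)) := by
      linear_combination ((p:ℤ) + 1) * E + ((p:ℤ) + 1) * hsum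
    exact stmt_1_case2 (p:ℤ) x y z a b c (((p:ℤ) + 1) * k - (y - c)) hp2 hxy hyz hxz
      hab hbc hac hsum.symm E'
end

section
/- Let p be a prime, e a positive integer with gcd(e, p) = 1, and F a field of characteristic p. Suppose M and M' are free F[u]/(u^{ep})-modules of rank d and f : M → M' is an F[u]/(u^{ep})-linear map. Let (e_1, ..., e_d) be a basis of M. If f(e_1) ∈ u^{n+1} M' for some positive integer n with n + 1 ≤ ep, then the image of f does not contain u^n M'. -/
abbrev TruncRing (F : Type*) [Field F] (N : ℕ) : Type _ :=
  Polynomial F ⧸ Ideal.span ({Polynomial.X ^ N} : Set (Polynomial F))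

noncomputable def uElt (F : Type*) [Field F] (N : ℕ) : TruncRing F N :=
  Ideal.Quotient.mk _ Polynomial.X

/-!
Reduce modulo `u^{n+1} M'`. There the image of `f` is generated by the `d - 1` images of
`e_2, …, e_d`, since `f(e_1)` dies, while it contains the classes of `u^n e'_1, …, u^n e'_d`,
which are killed by `u` and `F`-linearly independent. This is impossible: as every element of `R`
is a constant plus a multiple of `u`, a submodule `S` generated by `k` elements satisfies
`S ⊆ span_F (generators) + u S`, so rank–nullity for multiplication by `u` on `S` bounds the
`F`-dimension of its kernel by `k`.
-/

open Polynomial Submodule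
open scoped Pointwise

section SmulKernel

variable {F R Q : Type*} [Field F] [CommRing R] [Algebra F R] [AddCommGroup Q] [Module R Q]
  [Module F Q] [IsScalarTower F R Q]

theorem restrictScalars_span_le_span_sup_map_smul (u : R)
    (hu : ∀ r : R, ∃ (c : F) (r' : R), r = algebraMap F R c + u * r') (s : Set Q) :
    (span R s).restrictScalars F ≤ span F s ⊔
      ((span R s).restrictScalars F).map ((LinearMap.lsmul R Q u).restrictScalars F) := by
  intro x hx
  induction hx using Submodule.span_induction with
  | mem x hx => exact mem_sup_left (subset_span hx)
  | zero => exact zero_mem _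
  | add x y _ _ hx hy => exact add_mem hx hy
  | smul r x hxs hx =>
    obtain ⟨c, r', rfl⟩ := hu r
    rw [add_smul, algebraMap_smul, mul_smul]
    exact add_mem (smul_mem _ c hx) (mem_sup_right ⟨r' • x, smul_mem _ r' hxs, rfl⟩)

theorem card_le_card_of_linearIndependent_of_smul_eq_zero [Module.Finite F Q] (u : R)
    (hu : ∀ r : R, ∃ (c : F) (r' : R), r = algebraMap F R c + u * r')
    {ι κ : Type*} [Fintype ι] [Fintype κ] (v : ι → Q) {g : κ → Q}
    (hg : LinearIndependent F g) (hg_mem : ∀ k, g k ∈ span R (Set.range v))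
    (hg_smul : ∀ k, u • g k = 0) : Fintype.card κ ≤ Fintype.card ι := by
  set S := (span R (Set.range v)).restrictScalars F
  set μ := (LinearMap.lsmul R Q u).restrictScalars F
  set K := LinearMap.ker (μ.domRestrict S)
  let gK : κ → K := fun k => ⟨⟨g k, hg_mem k⟩, hg_smul k⟩
  have hker : Fintype.card κ ≤ Module.finrank F K :=
    (LinearIndependent.of_comp (S.subtype ∘ₗ K.subtype) (v := gK) hg).fintype_card_le_finrank
  have hrank : Module.finrank F (S.map μ) + Module.finrank F K = Module.finrank F S := by
    rw [← LinearMap.range_domRestrict]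
    exact (μ.domRestrict S).finrank_range_add_finrank_ker
  have hsup : Module.finrank F S ≤ Module.finrank F ↥(span F (Set.range v) ⊔ S.map μ) :=
    Submodule.finrank_mono (restrictScalars_span_le_span_sup_map_smul u hu (Set.range v))
  have hspan : Module.finrank F (span F (Set.range v)) ≤ Fintype.card ι :=
    finrank_range_le_card v
  have := Submodule.finrank_add_le_finrank_add_finrank (span F (Set.range v)) (S.map μ)
  omega

end SmulKernel

theorem LinearMap.range_le_span_of_apply_basis_eq_zero {R M Q ι : Type*} [Semiring R]
    [AddCommMonoid M] [AddCommMonoid Q] [Module R M] [Module R Q] (φ : M →ₗ[R] Q)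
    (b : Module.Basis ι R M) {i₀ : ι} (h : φ (b i₀) = 0) :
    range φ ≤ span R (Set.range fun j : {j // j ≠ i₀} => φ (b j)) := by
  rw [range_eq_map, ← b.span_eq, map_span, span_le]
  rintro _ ⟨_, ⟨i, rfl⟩, rfl⟩
  by_cases hi : i = i₀
  · subst hi
    simp [h]
  · exact subset_span ⟨⟨i, hi⟩, rfl⟩

namespace TruncRing

variable {F : Type*} [Field F] {N : ℕ} {M M' ι : Type*} [AddCommGroup M] [AddCommGroup M']
  [Module (TruncRing F N) M] [Module (TruncRing F N) M'] [Fintype ι]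

instance : Module.Finite F (TruncRing F N) := (monic_X_pow N).finite_quotient

theorem exists_eq_algebraMap_add_uElt_mul (r : TruncRing F N) :
    ∃ (c : F) (r' : TruncRing F N), r = algebraMap F _ c + uElt F N * r' := by
  obtain ⟨ρ, rfl⟩ := Ideal.Quotient.mk_surjective r
  refine ⟨ρ.coeff 0, Ideal.Quotient.mk _ ρ.divX, ?_⟩
  rw [uElt, ← Ideal.Quotient.mk_algebraMap, ← map_mul, ← map_add, algebraMap_eq, add_comm,
    X_mul_divX_add]

theorem eq_zero_of_algebraMap_mul_uElt_pow_eq {n : ℕ} (hn : n < N) {c : F}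
    {r : TruncRing F N} (h : algebraMap F _ c * uElt F N ^ n = uElt F N ^ (n + 1) * r) :
    c = 0 := by
  obtain ⟨ρ, rfl⟩ := Ideal.Quotient.mk_surjective r
  rw [uElt, ← Ideal.Quotient.mk_algebraMap, ← map_pow, ← map_mul, ← map_pow, ← map_mul,
    Ideal.Quotient.eq, Ideal.mem_span_singleton] at h
  obtain ⟨q, hq⟩ := h
  have hcoeff := congrArg (coeff · n) hq
  simp only [algebraMap_eq, coeff_sub, X_pow_mul, coeff_mul_X_pow'] at hcoeff
  rw [if_pos le_rfl, if_neg (by omega), if_neg (by omega)] at hcoeff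
  simpa using hcoeff

theorem linearIndependent_mk_uElt_pow_smul [Module F M'] [IsScalarTower F (TruncRing F N) M']
    {n : ℕ} (hn : n < N) (b : Module.Basis ι (TruncRing F N) M') :
    LinearIndependent F fun i =>
      (uElt F N ^ (n + 1) • (⊤ : Submodule (TruncRing F N) M')).mkQ (uElt F N ^ n • b i) := by
  rw [Fintype.linearIndependent_iff]
  intro c hc i
  simp_rw [← LinearMap.map_smul_of_tower, ← map_sum] at hc
  rw [mkQ_apply, Quotient.mk_eq_zero, mem_smul_pointwise_iff_exists] at hc
  obtain ⟨y, -, hy⟩ := hc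
  simp_rw [← algebraMap_smul (TruncRing F N) (c _) (uElt F N ^ n • b _), smul_smul] at hy
  have hcoord := congrArg (fun z => b.repr z i) hy
  simp only [map_smul, Finsupp.smul_apply, Module.Basis.repr_sum_self, smul_eq_mul] at hcoord
  exact eq_zero_of_algebraMap_mul_uElt_pow_eq hn hcoord.symm

theorem not_forall_uElt_pow_smul_mem_range (bM : Module.Basis ι (TruncRing F N) M)
    (bM' : Module.Basis ι (TruncRing F N) M') (f : M →ₗ[TruncRing F N] M')
    {n : ℕ} (hn : n < N) {i₀ : ι}
    (hf : f (bM i₀) ∈ uElt F N ^ (n + 1) • (⊤ : Submodule (TruncRing F N) M')) :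
    ¬ ∀ m' : M', uElt F N ^ n • m' ∈ LinearMap.range f := by
  classical
  intro hrange
  let _ : Module F M' := .compHom M' (algebraMap F (TruncRing F N))
  have : IsScalarTower F (TruncRing F N) M' :=
    ⟨fun c r x => by rw [Algebra.smul_def c r, mul_smul]; rfl⟩
  have := Module.Finite.of_basis bM'
  have : Module.Finite F M' := .trans (TruncRing F N) M'
  set U := uElt F N ^ (n + 1) • (⊤ : Submodule (TruncRing F N) M')
  have hspan := (U.mkQ ∘ₗ f).range_le_span_of_apply_basis_eq_zero bM
    ((Quotient.mk_eq_zero U).2 hf)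
  have hcard := card_le_card_of_linearIndependent_of_smul_eq_zero (uElt F N)
    exists_eq_algebraMap_add_uElt_mul _ (linearIndependent_mk_uElt_pow_smul hn bM')
    (fun i => hspan (LinearMap.range_comp f U.mkQ ▸ mem_map_of_mem (hrange (bM' i))))
    (fun i => by
      rw [← map_smul, smul_smul, ← pow_succ', mkQ_apply, Quotient.mk_eq_zero]
      exact smul_mem_pointwise_smul _ _ _ mem_top)
  exact (Fintype.card_subtype_lt (p := (· ≠ i₀)) (not_not.2 rfl)).not_ge hcard

end TruncRing

theorem stmt_3_general (p e : ℕ)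
    (F : Type*) [Field F]
    (d : ℕ) (hd : 0 < d)
    (M M' : Type*) [AddCommGroup M] [AddCommGroup M']
    [Module (TruncRing F (e * p)) M] [Module (TruncRing F (e * p)) M']
    (bM : Module.Basis (Fin d) (TruncRing F (e * p)) M)
    (bM' : Module.Basis (Fin d) (TruncRing F (e * p)) M')
    (f : M →ₗ[TruncRing F (e * p)] M')
    (n : ℕ) (hn2 : n + 1 ≤ e * p)
    (hfe : ∃ m' : M', f (bM ⟨0, hd⟩) = uElt F (e * p) ^ (n + 1) • m') :
    ¬ ∀ m' : M', uElt F (e * p) ^ n • m' ∈ LinearMap.range f := by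
  obtain ⟨m', hm'⟩ := hfe
  exact TruncRing.not_forall_uElt_pow_smul_mem_range bM bM' f hn2
    (hm' ▸ smul_mem_pointwise_smul m' _ ⊤ mem_top)

theorem stmt_3 (p e : ℕ) (hp : p.Prime) (he : 0 < e) (hcop : Nat.Coprime e p)
    (F : Type*) [Field F] [CharP F p]
    (d : ℕ) (hd : 0 < d)
    (M M' : Type*) [AddCommGroup M] [AddCommGroup M']
    [Module (TruncRing F (e * p)) M] [Module (TruncRing F (e * p)) M']
    (bM : Module.Basis (Fin d) (TruncRing F (e * p)) M)
    (bM' : Module.Basis (Fin d) (TruncRing F (e * p)) M')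
    (f : M →ₗ[TruncRing F (e * p)] M')
    (n : ℕ) (hn : 0 < n) (hn2 : n + 1 ≤ e * p)
    (hfe : ∃ m' : M', f (bM ⟨0, hd⟩) = uElt F (e * p) ^ (n + 1) • m') :
    ¬ ∀ m' : M', uElt F (e * p) ^ n • m' ∈ LinearMap.range f :=
  stmt_3_general p e F d hd M M' bM bM' f n hn2 hfe
end
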